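/- If a compact Hausdorff space X is I-favorable, then the hyperspace exp(X) of nonempty closed subsets of X with the Vietoris topology is I-favorable. -/

import Mathlib

open Set TopologicalSpace

variable (X : Type*) [TopologicalSpace X]

/-- A valid move of Player I: a finite family of nonempty open sets. -/
def IMove (A : Set (Set X)) : Prop :=
  A.Finite ∧ ∀ U ∈ A, IsOpen U ∧ U.Nonempty

/-- A valid response of Player II to the family `A`: a finite family of nonempty
open sets such that every member of `A` contains some member of `B`. -/
def IIMove (A B : Set (Set X)) : Prop :=
  IMove X B ∧ ∀ U ∈ A, ∃ V ∈ B, V ⊆ U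

/-- `X` is I-favorable: Player I has a winning strategy in the finite open-open
game. A strategy is a function from histories of Player II's moves to the next
move of Player I; it is winning if for every play in which Player II always
responds validly, each tail union of Player II's families is dense. -/
def IFavorable : Prop :=
  ∃ σ : List (Set (Set X)) → Set (Set X),
    (∀ hist, IMove X (σ hist)) ∧
    ∀ B : ℕ → Set (Set X),
      (∀ n, IIMove X (σ ((List.range n).map B)) (B n)) →
      ∀ k, Dense (⋃ (n : ℕ) (_ : k ≤ n), ⋃₀ B n)

/-- Player II has a winning strategy in the finite open-open game: a function
from histories of Player I's moves to responses of Player II which are valid,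
and such that whenever Player I plays validly, some tail union of Player II's
families fails to be dense. -/
def IIFavorable : Prop :=
  ∃ τ : List (Set (Set X)) → Set (Set X),
    ∀ A : ℕ → Set (Set X), (∀ n, IMove X (A n)) →
      (∀ n, IIMove X (A n) (τ ((List.range (n + 1)).map A))) ∧
      ∃ k, ¬ Dense (⋃ (n : ℕ) (_ : k ≤ n), ⋃₀ τ ((List.range (n + 1)).map A))

/-- `Q` is a π-base for `X`: a family of nonempty open sets such that every
nonempty open set contains a member of the family. -/
def IsPiBase (Q : Set (Set X)) : Prop :=
  (∀ U ∈ Q, IsOpen U ∧ U.Nonempty) ∧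
  ∀ V : Set X, IsOpen V → V.Nonempty → ∃ U ∈ Q, U ⊆ V

/-- `C` is a club filter with respect to the π-base `Q`. -/
def IsClubFilter (Q : Set (Set X)) (C : Set (Set (Set X))) : Prop :=
  (∀ P ∈ C, P.Countable ∧ P ⊆ Q) ∧
  (∀ P : ℕ → Set (Set X), (∀ n, P n ∈ C) → Monotone P → (⋃ n, P n) ∈ C) ∧
  (∀ A : Set (Set X), A.Countable → A ⊆ Q → ∃ P ∈ C, A ⊆ P) ∧
  (∀ V : Set X, IsOpen V → V.Nonempty →
    ∀ P ∈ C, ∃ W ∈ P, ∀ U ∈ P, U ⊆ W → (U ∩ V).Nonempty)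

/-- The hyperspace of nonempty closed subsets of `X`. -/
def Hyper (X : Type*) [TopologicalSpace X] : Type _ :=
  {A : Set X // IsClosed A ∧ A.Nonempty}

/-- The Vietoris basic open set `⟨V₁,…,Vₙ⟩` determined by a list of open sets:
all nonempty closed sets contained in the union and meeting each member. -/
def vietorisBasic {X : Type*} [TopologicalSpace X] (L : List (Set X)) :
    Set (Hyper X) :=
  {A | A.1 ⊆ ⋃₀ {V | V ∈ L} ∧ ∀ V ∈ L, (A.1 ∩ V).Nonempty}

/-- The Vietoris topology on the hyperspace, generated by the basic sets
`⟨V₁,…,Vₙ⟩` for nonempty finite lists of open sets. -/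
instance (X : Type*) [TopologicalSpace X] : TopologicalSpace (Hyper X) :=
  TopologicalSpace.generateFrom
    {S | ∃ L : List (Set X), L ≠ [] ∧ (∀ V ∈ L, IsOpen V) ∧ S = vietorisBasic L}


/-!
A winning strategy `σ` of Player I in `X` yields a club filter on `X`: the countable families `P`
of nonempty open sets closed under `σ`-answers and under nonempty intersections. For each nonempty
open `V` such a `P` has a member `W` all of whose subsets in `P` meet `V`; otherwise Player II
defeats `σ` by answering inside `P` and away from `V`. The Vietoris basic sets `⟨V₁, …, Vₙ⟩` with
all `Vᵢ ∈ P` then form a club filter on the hyperspace with respect to the π-base of nonempty basic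
sets: finite subsets of `X` are points of the hyperspace, which makes inclusion between basic sets
readable from their entries. Finally, a club filter gives Player I a winning strategy.
-/

theorem Monotone.exists_subset_of_finite_subset_iUnion {α : Type*} {P : ℕ → Set α}
    (hP : Monotone P) {s : Set α} (hs : s.Finite) (hsP : s ⊆ ⋃ n, P n) : ∃ n, s ⊆ P n := by
  choose! f hf using fun x (hx : x ∈ s) => mem_iUnion.1 (hsP hx)
  obtain ⟨N, hN⟩ := (hs.image f).exists_le
  exact ⟨N, fun x hx => hP (hN _ (mem_image_of_mem f hx)) (hf x hx)⟩

theorem exists_countable_closed_superset {α : Type*} {Φ : Set α → Set α}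
    (hΦ : ∀ P : ℕ → Set α, Monotone P → Φ (⋃ n, P n) ⊆ ⋃ n, Φ (P n))
    (hcount : ∀ P : Set α, P.Countable → (Φ P).Countable) {Q : Set α}
    (hQ : ∀ P ⊆ Q, Φ P ⊆ Q) {A : Set α} (hA : A.Countable) (hAQ : A ⊆ Q) :
    ∃ P, A ⊆ P ∧ P.Countable ∧ P ⊆ Q ∧ Φ P ⊆ P := by
  set g : ℕ → Set α := fun n => (fun P => P ∪ Φ P)^[n] A
  have hsucc : ∀ n, g (n + 1) = g n ∪ Φ (g n) := fun n => Function.iterate_succ_apply' _ n A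
  have hmono : Monotone g := monotone_nat_of_le_succ fun n => (hsucc n).ge.trans' subset_union_left
  have hg : ∀ n, (g n).Countable ∧ g n ⊆ Q := by
    intro n
    induction n with
    | zero => exact ⟨hA, hAQ⟩
    | succ n ih => rw [hsucc]; exact ⟨ih.1.union (hcount _ ih.1), union_subset ih.2 (hQ _ ih.2)⟩
  refine ⟨⋃ n, g n, subset_iUnion g 0, countable_iUnion fun n => (hg n).1,
    iUnion_subset fun n => (hg n).2, (hΦ g hmono).trans (iUnion_subset fun n => ?_)⟩
  exact (hsucc n).ge.trans' subset_union_right |>.trans (subset_iUnion g (n + 1))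

/-- The history of a play in which Player II answers each move `A` of Player I by `τ A`. -/
def responseHistory {α β : Type*} (σ : List β → α) (τ : α → β) : ℕ → List β
  | 0 => []
  | n + 1 => responseHistory σ τ n ++ [τ (σ (responseHistory σ τ n))]

theorem map_range_responseHistory {α β : Type*} (σ : List β → α) (τ : α → β) (n : ℕ) :
    (List.range n).map (fun m => τ (σ (responseHistory σ τ m))) = responseHistory σ τ n := by
  induction n with
  | zero => rfl
  | succ n ih => rw [List.range_succ, List.map_append, ih]; rfl

theorem List.exists_finite_transversal {α : Type*} (L : List (Set α))
    (hL : ∀ V ∈ L, V.Nonempty) :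
    ∃ S : Set α, S.Finite ∧ S ⊆ ⋃₀ {V | V ∈ L} ∧ ∀ V ∈ L, (S ∩ V).Nonempty := by
  induction L with
  | nil => exact ⟨∅, finite_empty, empty_subset _, by simp⟩
  | cons V L ih =>
    obtain ⟨S, hSf, hSL, hSV⟩ := ih fun W hW => hL W (List.mem_cons_of_mem V hW)
    obtain ⟨x, hx⟩ := hL V List.mem_cons_self
    refine ⟨insert x S, hSf.insert x, insert_subset ⟨V, List.mem_cons_self, hx⟩
      (hSL.trans (sUnion_mono fun W hW => List.mem_cons_of_mem V hW)), ?_⟩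
    simp only [List.mem_cons, forall_eq_or_imp]
    exact ⟨⟨x, mem_insert x S, hx⟩,
      fun W hW => (hSV W hW).mono (inter_subset_inter_left W (Set.subset_insert x S))⟩

def nonemptyOpens (Z : Type*) [TopologicalSpace Z] : Set (Set Z) := {U | IsOpen U ∧ U.Nonempty}

section Game

variable {Z : Type*} [TopologicalSpace Z]

theorem exists_forall_subset_inter_nonempty_of_winning {σ : List (Set (Set Z)) → Set (Set Z)}
    (hσmove : ∀ hist, IMove Z (σ hist))
    (hσwin : ∀ B : ℕ → Set (Set Z), (∀ n, IIMove Z (σ ((List.range n).map B)) (B n)) →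
      ∀ k, Dense (⋃ (n : ℕ) (_ : k ≤ n), ⋃₀ B n))
    {P : Set (Set Z)} (hPo : P ⊆ nonemptyOpens Z)
    (hPσ : ∀ L : List (Set (Set Z)), (∀ b ∈ L, b.Finite ∧ b ⊆ P) → σ L ⊆ P)
    {V : Set Z} (hV : IsOpen V) (hVne : V.Nonempty) :
    ∃ W ∈ P, ∀ U ∈ P, U ⊆ W → (U ∩ V).Nonempty := by
  by_contra! hcon
  -- Player II answers every move inside `P` and away from `V`, so Player I cannot win.
  choose! u huP huW huV using hcon
  set hist := responseHistory σ (u '' ·)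
  have hσP : ∀ n, σ (hist n) ⊆ P := by
    intro n
    refine hPσ _ ?_
    induction n with
    | zero => simp [hist, responseHistory]
    | succ n ih =>
      simp only [hist, responseHistory, List.mem_append, List.mem_singleton]
      rintro b (hb | rfl)
      · exact ih b hb
      · exact ⟨(hσmove _).1.image u, image_subset_iff.2 fun W hW => huP W (hPσ _ ih hW)⟩
  have hII : ∀ n, IIMove Z (σ ((List.range n).map fun m => u '' σ (hist m))) (u '' σ (hist n)) := by
    intro n
    rw [map_range_responseHistory]
    refine ⟨⟨(hσmove _).1.image u, ?_⟩, fun W hW => ⟨u W, mem_image_of_mem u hW, huW W (hσP n hW)⟩⟩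
    rintro _ ⟨W, hW, rfl⟩
    exact hPo (huP W (hσP n hW))
  obtain ⟨x, hxV, hx⟩ := (hσwin _ hII 0).inter_open_nonempty V hV hVne
  simp only [mem_iUnion, mem_sUnion] at hx
  obtain ⟨n, -, _, ⟨W, hW, rfl⟩, hxW⟩ := hx
  exact (huV W (hσP n hW)).subset ⟨hxW, hxV⟩

/-- What a member of the club filter built from the strategy `σ` must absorb from `P`. -/
def followUps (σ : List (Set (Set Z)) → Set (Set Z)) (P : Set (Set Z)) : Set (Set Z) :=
  (⋃ L ∈ {L : List (Set (Set Z)) | ∀ b ∈ L, b.Finite ∧ b ⊆ P}, σ L) ∪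
    (image2 (· ∩ ·) P P ∩ nonemptyOpens Z)

theorem followUps_iUnion_subset (σ : List (Set (Set Z)) → Set (Set Z)) {P : ℕ → Set (Set Z)}
    (hP : Monotone P) : followUps σ (⋃ n, P n) ⊆ ⋃ n, followUps σ (P n) := by
  rintro W (hW | ⟨⟨U, hU, V, hV, rfl⟩, hUV⟩)
  · obtain ⟨L, hL, hWL⟩ := mem_iUnion₂.1 hW
    obtain ⟨N, hN⟩ := hP.exists_subset_of_finite_subset_iUnion
      (L.finite_toSet.biUnion fun b hb => (hL b hb).1) (iUnion₂_subset fun b hb => (hL b hb).2)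
    exact mem_iUnion.2 ⟨N, Or.inl (mem_iUnion₂.2
      ⟨L, fun b hb => ⟨(hL b hb).1, (subset_biUnion_of_mem (u := id) hb).trans hN⟩, hWL⟩)⟩
  · obtain ⟨N, hN⟩ := hP.exists_subset_of_finite_subset_iUnion (toFinite {U, V})
      (insert_subset hU (singleton_subset_iff.2 hV))
    exact mem_iUnion.2 ⟨N, Or.inr ⟨mem_image2_of_mem (hN (mem_insert U _))
      (hN (mem_insert_of_mem U rfl)), hUV⟩⟩

theorem Set.Countable.followUps {σ : List (Set (Set Z)) → Set (Set Z)}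
    (hσ : ∀ L, (σ L).Countable) {P : Set (Set Z)} (hP : P.Countable) :
    (followUps σ P).Countable := by
  have : Countable {b : Set (Set Z) | b.Finite ∧ b ⊆ P} :=
    (countable_ofPred_finite_subset hP).to_subtype
  refine .union (.biUnion ?_ fun L _ => hσ L) ((hP.image2 hP _).mono inter_subset_left)
  exact (range_list_map_coe {b : Set (Set Z) | b.Finite ∧ b ⊆ P}).subst (countable_range _)

theorem followUps_subset_nonemptyOpens {σ : List (Set (Set Z)) → Set (Set Z)}
    (hσ : ∀ L, IMove Z (σ L)) (P : Set (Set Z)) : followUps σ P ⊆ nonemptyOpens Z :=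
  union_subset (iUnion₂_subset fun L _ => (hσ L).2) inter_subset_right

theorem IFavorable.exists_isClubFilter (h : IFavorable Z) :
    ∃ C, IsClubFilter Z (nonemptyOpens Z) C ∧
      ∀ P ∈ C, ∀ U ∈ P, ∀ V ∈ P, (U ∩ V).Nonempty → U ∩ V ∈ P := by
  obtain ⟨σ, hσmove, hσwin⟩ := h
  refine ⟨{P | P.Countable ∧ P ⊆ nonemptyOpens Z ∧ followUps σ P ⊆ P}, ⟨?_, ?_, ?_, ?_⟩, ?_⟩
  · exact fun P hP => ⟨hP.1, hP.2.1⟩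
  · intro P hP hmono
    exact ⟨countable_iUnion fun n => (hP n).1, iUnion_subset fun n => (hP n).2.1,
      (followUps_iUnion_subset σ hmono).trans (iUnion_mono fun n => (hP n).2.2)⟩
  · intro A hA hAQ
    obtain ⟨P, hAP, hP⟩ := exists_countable_closed_superset (fun _ => followUps_iUnion_subset σ)
      (fun P hP => hP.followUps fun L => (hσmove L).1.countable)
      (fun P _ => followUps_subset_nonemptyOpens hσmove P) hA hAQ
    exact ⟨P, hP, hAP⟩
  · rintro V hV hVne P ⟨-, hPo, hPcl⟩
    exact exists_forall_subset_inter_nonempty_of_winning hσmove hσwin hPo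
      (fun L hL _ hx => hPcl (Or.inl (mem_biUnion hL hx))) hV hVne
  · rintro P ⟨-, hPo, hPcl⟩ U hU V hV hUV
    exact hPcl (Or.inr ⟨mem_image2_of_mem hU hV, (hPo hU).1.inter (hPo hV).1, hUV⟩)

theorem IsClubFilter.exists_extension {Q : Set (Set Z)} {C : Set (Set (Set Z))}
    (hC : IsClubFilter Z Q C) (hQ : IsPiBase Z Q) {P : Set (Set Z)} (hP : P ∈ C)
    {b : Set (Set Z)} (hb : b.Countable) :
    ∃ P' ∈ C, P ⊆ P' ∧ ∀ O ∈ b, IsOpen O → O.Nonempty → ∃ q ∈ P', q ⊆ O := by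
  choose! q hqQ hqO using hQ.2
  obtain ⟨P', hP'C, hP'⟩ := hC.2.2.1 (P ∪ q '' {O ∈ b | IsOpen O ∧ O.Nonempty})
    ((hC.1 P hP).1.union ((hb.mono (sep_subset _ _)).image q))
    (union_subset (hC.1 P hP).2 (by rintro _ ⟨O, ⟨-, hO, hOne⟩, rfl⟩; exact hqQ O hO hOne))
  exact ⟨P', hP'C, subset_union_left.trans hP', fun O hOb hO hOne =>
    ⟨q O, hP' (Or.inr ⟨O, ⟨hOb, hO, hOne⟩, rfl⟩), hqO O hO hOne⟩⟩

theorem dense_iUnion_of_forall_answered {P : Set (Set Z)}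
    (hP : ∀ V : Set Z, IsOpen V → V.Nonempty → ∃ W ∈ P, ∀ U ∈ P, U ⊆ W → (U ∩ V).Nonempty)
    {B : ℕ → Set (Set Z)} (hBP : ∀ n, ∀ O ∈ B n, ∃ q ∈ P, q ⊆ O)
    (hans : ∀ W ∈ P, ∀ k, ∃ n ≥ k, ∃ O ∈ B n, O ⊆ W) (k : ℕ) :
    Dense (⋃ (n : ℕ) (_ : k ≤ n), ⋃₀ B n) := by
  refine dense_iff_inter_open.2 fun V hV hVne => ?_
  obtain ⟨W, hWP, hW⟩ := hP V hV hVne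
  obtain ⟨n, hkn, O, hOB, hOW⟩ := hans W hWP k
  obtain ⟨q, hqP, hqO⟩ := hBP n O hOB
  obtain ⟨x, hxq, hxV⟩ := hW q hqP (hqO.trans hOW)
  exact ⟨x, hxV, mem_iUnion₂.2 ⟨n, hkn, O, hOB, hqO hxq⟩⟩

theorem IsClubFilter.iFavorable {Q : Set (Set Z)} {C : Set (Set (Set Z))}
    (hC : IsClubFilter Z Q C) (hQ : IsPiBase Z Q) : IFavorable Z := by
  choose! next hnextC hnext_sup hnext_shrink using
    fun P (hP : P ∈ C) (b : Set (Set Z)) (hb : b.Countable) => hC.exists_extension hQ hP hb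
  choose! enum henum using fun P (hP : P ∈ C) => countable_iff_exists_subset_range.1 (hC.1 P hP).1
  obtain ⟨P₀, hP₀, -⟩ := hC.2.2.1 ∅ countable_empty (empty_subset Q)
  -- Player I grows a chain `P 0 ⊆ P 1 ⊆ …` in `C` along the history and at stage `n` plays the
  -- sets `enum (P m) i` with `m, i ≤ n`, so each member of the limit is played at all late stages.
  let chain (hist : List (Set (Set Z))) : Set (Set Z) := hist.foldl next P₀
  refine ⟨fun hist => image2 (fun m i => enum (chain (hist.take m)) i)
    (Iic hist.length) (Iic hist.length) ∩ nonemptyOpens Z,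
    fun hist => ⟨((finite_Iic _).image2 _ (finite_Iic _)).subset inter_subset_left,
      fun U hU => hU.2⟩, fun B hB => ?_⟩
  let P (n : ℕ) := chain ((List.range n).map B)
  have hPsucc : ∀ n, P (n + 1) = next (P n) (B n) := by
    simp [P, chain, List.range_succ, List.foldl_append]
  have hPC : ∀ n, P n ∈ C := by
    intro n
    induction n with
    | zero => exact hP₀
    | succ n ih => rw [hPsucc]; exact hnextC _ ih _ (hB n).1.1.countable
  have hPmono : Monotone P := monotone_nat_of_le_succ fun n =>
    (hPsucc n).ge.trans' (hnext_sup _ (hPC n) _ (hB n).1.1.countable)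
  refine dense_iUnion_of_forall_answered (fun V hV hVne => hC.2.2.2 V hV hVne _
    (hC.2.1 P hPC hPmono)) (fun n O hO => ?_) (fun W hW k => ?_)
  · obtain ⟨q, hq, hqO⟩ := hnext_shrink _ (hPC n) _ (hB n).1.1.countable O hO
      ((hB n).1.2 O hO).1 ((hB n).1.2 O hO).2
    exact ⟨q, mem_iUnion.2 ⟨n + 1, (hPsucc n).symm ▸ hq⟩, hqO⟩
  · obtain ⟨m, hm⟩ := mem_iUnion.1 hW
    obtain ⟨i, rfl⟩ := henum _ (hPC m) hm
    refine ⟨k + m + i, by omega,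
      (hB (k + m + i)).2 _ ⟨⟨m, ?_, i, ?_, ?_⟩, hQ.1 _ ((hC.1 _ (hPC m)).2 hm)⟩⟩
    · simp only [List.length_map, List.length_range, mem_Iic]; omega
    · simp only [List.length_map, List.length_range, mem_Iic]; omega
    · simp only [← List.map_take, List.take_range, min_eq_left (by omega : m ≤ k + m + i)]; rfl

end Game

section Vietoris

variable {X}

theorem exists_mem_vietorisBasic [T1Space X] {L : List (Set X)} (hL : ∀ V ∈ L, V.Nonempty)
    {x : X} (hx : x ∈ ⋃₀ {V | V ∈ L}) : ∃ A ∈ vietorisBasic L, x ∈ A.1 := by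
  obtain ⟨S, hSf, hSL, hSV⟩ := L.exists_finite_transversal hL
  exact ⟨⟨insert x S, (hSf.insert x).isClosed, insert_nonempty x S⟩, ⟨insert_subset hx hSL,
    fun V hV => (hSV V hV).mono (inter_subset_inter_left V (subset_insert x S))⟩, mem_insert x S⟩

theorem vietorisBasic_nonempty [T1Space X] {L : List (Set X)} (hL0 : L ≠ [])
    (hL : ∀ V ∈ L, V.Nonempty) : (vietorisBasic L).Nonempty := by
  obtain ⟨V, hV⟩ := List.exists_mem_of_ne_nil L hL0
  obtain ⟨x, hx⟩ := hL V hV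
  obtain ⟨A, hA, -⟩ := exists_mem_vietorisBasic hL ⟨V, hV, hx⟩
  exact ⟨A, hA⟩

theorem vietorisBasic_subset_vietorisBasic {L M : List (Set X)}
    (hLM : ⋃₀ {V | V ∈ L} ⊆ ⋃₀ {W | W ∈ M}) (hML : ∀ W ∈ M, ∃ V ∈ L, V ⊆ W) :
    vietorisBasic L ⊆ vietorisBasic M := fun _ hA =>
  ⟨hA.1.trans hLM, fun W hW =>
    let ⟨V, hV, hVW⟩ := hML W hW
    (hA.2 V hV).mono (inter_subset_inter_right _ hVW)⟩

theorem vietorisBasic_inter (L M : List (Set X)) :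
    vietorisBasic L ∩ vietorisBasic M =
      vietorisBasic (L.map (· ∩ ⋃₀ {W | W ∈ M}) ++ M.map (· ∩ ⋃₀ {V | V ∈ L})) := by
  set N := L.map (· ∩ ⋃₀ {W | W ∈ M}) ++ M.map (· ∩ ⋃₀ {V | V ∈ L})
  have hN : ∀ U ∈ N, U ⊆ ⋃₀ {V | V ∈ L} ∧ U ⊆ ⋃₀ {W | W ∈ M} := by
    simp only [N, List.mem_append, List.mem_map]
    rintro _ (⟨V, hV, rfl⟩ | ⟨W, hW, rfl⟩)
    · exact ⟨inter_subset_left.trans (subset_sUnion_of_mem hV), inter_subset_right⟩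
    · exact ⟨inter_subset_right, inter_subset_left.trans (subset_sUnion_of_mem hW)⟩
  refine Subset.antisymm (fun _ ⟨hAL, hAM⟩ => ⟨fun x hx => ?_, fun U hU => ?_⟩)
    (subset_inter (vietorisBasic_subset_vietorisBasic (sUnion_subset fun U hU => (hN U hU).1)
      fun V hV => ⟨_, List.mem_append_left _ (List.mem_map_of_mem hV), inter_subset_left⟩)
      (vietorisBasic_subset_vietorisBasic (sUnion_subset fun U hU => (hN U hU).2)
      fun W hW => ⟨_, List.mem_append_right _ (List.mem_map_of_mem hW), inter_subset_left⟩))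
  · obtain ⟨V, hV, hxV⟩ := hAL.1 hx
    exact ⟨_, List.mem_append_left _ (List.mem_map_of_mem hV), hxV, hAM.1 hx⟩
  · simp only [N, List.mem_append, List.mem_map] at hU
    rcases hU with ⟨V, hV, rfl⟩ | ⟨W, hW, rfl⟩
    · obtain ⟨z, hzA, hzV⟩ := hAL.2 V hV
      exact ⟨z, hzA, hzV, hAM.1 hzA⟩
    · obtain ⟨z, hzA, hzW⟩ := hAM.2 W hW
      exact ⟨z, hzA, hzW, hAL.1 hzA⟩

theorem vietorisBasic_subset_vietorisBasic_iff [T1Space X] {L M : List (Set X)} (hL0 : L ≠ [])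
    (hL : ∀ V ∈ L, V.Nonempty) :
    vietorisBasic L ⊆ vietorisBasic M ↔
      ⋃₀ {V | V ∈ L} ⊆ ⋃₀ {W | W ∈ M} ∧ ∀ W ∈ M, ∃ V ∈ L, V ⊆ W := by
  refine ⟨fun h => ⟨fun x hx => ?_, fun W hW => ?_⟩,
    fun h => vietorisBasic_subset_vietorisBasic h.1 h.2⟩
  · obtain ⟨A, hA, hxA⟩ := exists_mem_vietorisBasic hL hx
    exact (h hA).1 hxA
  · by_contra! hLW
    -- A finite set meeting every `V \ W` lies in `vietorisBasic L` but misses `W`.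
    obtain ⟨A, hA⟩ := vietorisBasic_nonempty (L := L.map (· \ W)) (by simpa using hL0)
      (by simpa [sdiff_nonempty] using hLW)
    have hAL : A ∈ vietorisBasic L := by
      refine vietorisBasic_subset_vietorisBasic (sUnion_subset fun U hU => ?_)
        (fun V hV => ⟨_, List.mem_map_of_mem hV, sdiff_subset⟩) hA
      obtain ⟨V, hV, rfl⟩ := List.mem_map.1 hU
      exact sdiff_subset.trans (subset_sUnion_of_mem hV)
    obtain ⟨x, hxA, hxW⟩ := (h hAL).2 W hW
    obtain ⟨_, hU, hxU⟩ := hA.1 hxA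
    obtain ⟨V, -, rfl⟩ := List.mem_map.1 hU
    exact hxU.2 hxW

theorem vietorisBasic_inter_nonempty [T1Space X] {L M : List (Set X)} (hL0 : L ≠ [])
    (hL : ∀ V ∈ L, (V ∩ ⋃₀ {W | W ∈ M}).Nonempty) (hM : ∀ W ∈ M, (W ∩ ⋃₀ {V | V ∈ L}).Nonempty) :
    (vietorisBasic L ∩ vietorisBasic M).Nonempty := by
  rw [vietorisBasic_inter]
  refine vietorisBasic_nonempty (by simp [hL0]) ?_
  simpa [or_imp, forall_and] using ⟨hL, hM⟩

theorem eq_of_vietorisBasic_singleton_eq [T1Space X] {V : Set X}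
    {L : List (Set X)} (hL : ∀ W ∈ L, W.Nonempty) (h : vietorisBasic [V] = vietorisBasic L)
    {W : Set X} (hW : W ∈ L) : W = V := by
  have hL0 : L ≠ [] := List.ne_nil_of_mem hW
  have hWV : W ⊆ V := fun x hx => by
    simpa using ((vietorisBasic_subset_vietorisBasic_iff hL0 hL).1 h.ge).1 ⟨W, hW, hx⟩
  obtain ⟨V', hV', hV'W⟩ := ((vietorisBasic_subset_vietorisBasic_iff (List.cons_ne_nil V [])
    (by simpa using (hL W hW).mono hWV)).1 h.le).2 W hW
  rw [List.mem_singleton.1 hV'] at hV'W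
  exact hWV.antisymm hV'W

def vietorisBasics (P : Set (Set X)) : Set (Set (Hyper X)) :=
  {S | ∃ L : List (Set X), L ≠ [] ∧ (∀ V ∈ L, V ∈ P) ∧ S = vietorisBasic L}

theorem isTopologicalBasis_vietorisBasics :
    IsTopologicalBasis (vietorisBasics {V : Set X | IsOpen V}) := by
  refine ⟨?_, sUnion_eq_univ_iff.2 fun A => ⟨_, ⟨[univ], List.cons_ne_nil _ _, by simp, rfl⟩,
    by simpa [vietorisBasic] using A.2.2⟩, rfl⟩
  rintro _ ⟨L, hL0, hL, rfl⟩ _ ⟨M, -, hM, rfl⟩ A hA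
  rw [vietorisBasic_inter] at hA ⊢
  refine ⟨_, ⟨_, by simp [hL0], ?_, rfl⟩, hA, subset_rfl⟩
  simp only [List.mem_append, List.mem_map]
  rintro _ (⟨V, hV, rfl⟩ | ⟨W, hW, rfl⟩)
  · exact (hL V hV).inter (isOpen_sUnion hM)
  · exact (hM W hW).inter (isOpen_sUnion hL)

theorem isPiBase_vietorisBasics [T1Space X] :
    IsPiBase (Hyper X) (vietorisBasics (nonemptyOpens X)) := by
  refine ⟨?_, fun G hG ⟨A, hA⟩ => ?_⟩
  · rintro _ ⟨L, hL0, hL, rfl⟩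
    exact ⟨isTopologicalBasis_vietorisBasics.isOpen ⟨L, hL0, fun V hV => (hL V hV).1, rfl⟩,
      vietorisBasic_nonempty hL0 fun V hV => (hL V hV).2⟩
  · obtain ⟨_, ⟨L, hL0, hL, rfl⟩, hAL, hLG⟩ :=
      isTopologicalBasis_vietorisBasics.exists_subset_of_mem_open hA hG
    exact ⟨_, ⟨L, hL0, fun V hV => ⟨hL V hV, (hAL.2 V hV).mono inter_subset_right⟩, rfl⟩, hLG⟩

theorem vietorisBasics_mono : Monotone (vietorisBasics (X := X)) := by
  rintro P P' hPP' _ ⟨L, hL0, hL, rfl⟩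
  exact ⟨L, hL0, fun V hV => hPP' (hL V hV), rfl⟩

theorem vietorisBasics_subset_vietorisBasics_iff [T1Space X] {P P' : Set (Set X)}
    (hP' : ∀ V ∈ P', V.Nonempty) : vietorisBasics P ⊆ vietorisBasics P' ↔ P ⊆ P' := by
  refine ⟨fun h V hV => ?_, fun h => vietorisBasics_mono h⟩
  obtain ⟨L, hL0, hL, hVL⟩ := h ⟨[V], List.cons_ne_nil V [], by simpa using hV, rfl⟩
  obtain ⟨W, hW⟩ := List.exists_mem_of_ne_nil L hL0
  rw [← eq_of_vietorisBasic_singleton_eq (fun W hW => hP' W (hL W hW)) hVL hW]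
  exact hL W hW

theorem vietorisBasics_iUnion {P : ℕ → Set (Set X)} (hP : Monotone P) :
    vietorisBasics (⋃ n, P n) = ⋃ n, vietorisBasics (P n) := by
  refine Subset.antisymm ?_ (iUnion_subset fun n => vietorisBasics_mono (subset_iUnion P n))
  rintro _ ⟨L, hL0, hL, rfl⟩
  obtain ⟨N, hN⟩ := hP.exists_subset_of_finite_subset_iUnion L.finite_toSet hL
  exact mem_iUnion.2 ⟨N, L, hL0, fun V hV => hN hV, rfl⟩

theorem countable_vietorisBasics {P : Set (Set X)} (hP : P.Countable) :
    (vietorisBasics P).Countable := by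
  have := hP.to_subtype
  refine (countable_range fun L : List P => vietorisBasic (L.map (↑))).mono ?_
  rintro _ ⟨L, -, hL, rfl⟩
  obtain ⟨L', rfl⟩ : L ∈ range (List.map ((↑) : P → Set X)) := (range_list_map_coe P).symm ▸ hL
  exact ⟨L', rfl⟩

theorem exists_mem_vietorisBasics_forall_subset_inter_nonempty [T1Space X] {P : Set (Set X)}
    (hPne : ∀ V ∈ P, V.Nonempty)
    (hPinter : ∀ U ∈ P, ∀ V ∈ P, (U ∩ V).Nonempty → U ∩ V ∈ P)
    (hPgood : ∀ V : Set X, IsOpen V → V.Nonempty → ∃ W ∈ P, ∀ U ∈ P, U ⊆ W → (U ∩ V).Nonempty)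
    {𝒱 : Set (Hyper X)} (h𝒱 : IsOpen 𝒱) (h𝒱ne : 𝒱.Nonempty) :
    ∃ 𝒲 ∈ vietorisBasics P, ∀ 𝒰 ∈ vietorisBasics P, 𝒰 ⊆ 𝒲 → (𝒰 ∩ 𝒱).Nonempty := by
  obtain ⟨_, ⟨L, hL0, hL, rfl⟩, hL𝒱⟩ := isPiBase_vietorisBasics.2 𝒱 h𝒱 h𝒱ne
  choose! g hgP hg using hPgood
  have hgL : ∀ V ∈ L, g V ∈ P ∧ ∀ U ∈ P, U ⊆ g V → (U ∩ V).Nonempty := fun V hV =>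
    ⟨hgP V (hL V hV).1 (hL V hV).2, hg V (hL V hV).1 (hL V hV).2⟩
  refine ⟨vietorisBasic (L.map g), ⟨_, by simpa using hL0,
    by simpa using fun V hV => (hgL V hV).1, rfl⟩, ?_⟩
  rintro _ ⟨M, hM0, hM, rfl⟩ hMg
  obtain ⟨hMg₁, hMg₂⟩ :=
    (vietorisBasic_subset_vietorisBasic_iff hM0 fun U hU => hPne U (hM U hU)).1 hMg
  refine (vietorisBasic_inter_nonempty hM0 (fun U hU => ?_) fun V hV => ?_).mono
    (inter_subset_inter_right _ hL𝒱)
  · obtain ⟨x, hxU⟩ := hPne U (hM U hU)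
    obtain ⟨_, hgV, hxgV⟩ := hMg₁ ⟨U, hU, hxU⟩
    obtain ⟨V, hV, rfl⟩ := List.mem_map.1 hgV
    -- `U ∩ g V` is again in `P`, so it meets `V`.
    obtain ⟨y, ⟨hyU, -⟩, hyV⟩ := (hgL V hV).2 _
      (hPinter U (hM U hU) _ (hgL V hV).1 ⟨x, hxU, hxgV⟩) inter_subset_right
    exact ⟨y, hyU, V, hV, hyV⟩
  · obtain ⟨U, hU, hUg⟩ := hMg₂ (g V) (List.mem_map_of_mem hV)
    obtain ⟨y, hyU, hyV⟩ := (hgL V hV).2 U (hM U hU) hUg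
    exact ⟨y, hyV, U, hU, hyU⟩

theorem IsClubFilter.image_vietorisBasics [T1Space X] {C : Set (Set (Set X))}
    (hC : IsClubFilter X (nonemptyOpens X) C)
    (hinter : ∀ P ∈ C, ∀ U ∈ P, ∀ V ∈ P, (U ∩ V).Nonempty → U ∩ V ∈ P) :
    IsClubFilter (Hyper X) (vietorisBasics (nonemptyOpens X)) (vietorisBasics '' C) := by
  have hne : ∀ P ∈ C, ∀ V ∈ P, V.Nonempty := fun P hP V hV => ((hC.1 P hP).2 hV).2
  refine ⟨?_, fun 𝒬 h𝒬 hmono => ?_, fun 𝒜 h𝒜 h𝒜Q => ?_, ?_⟩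
  · rintro _ ⟨P, hP, rfl⟩
    exact ⟨countable_vietorisBasics (hC.1 P hP).1, vietorisBasics_mono (hC.1 P hP).2⟩
  · choose P hPC hP𝒬 using h𝒬
    have hPmono : Monotone P := fun m n hmn =>
      (vietorisBasics_subset_vietorisBasics_iff (hne _ (hPC n))).1
        ((hP𝒬 m).trans_le ((hmono hmn).trans_eq (hP𝒬 n).symm))
    refine ⟨⋃ n, P n, hC.2.1 P hPC hPmono, ?_⟩
    simp only [vietorisBasics_iUnion hPmono, hP𝒬]
  · choose! L hL0 hL h𝒜L using fun S (hS : S ∈ 𝒜) => mem_ofPred.1 (h𝒜Q hS)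
    obtain ⟨P, hPC, hP⟩ := hC.2.2.1 (⋃ S ∈ 𝒜, {V | V ∈ L S})
      (h𝒜.biUnion fun S _ => (L S).finite_toSet.countable)
      (iUnion₂_subset fun S hS V hV => hL S hS V hV)
    exact ⟨_, ⟨P, hPC, rfl⟩, fun S hS =>
      ⟨L S, hL0 S hS, fun V hV => hP (mem_biUnion hS hV), h𝒜L S hS⟩⟩
  · rintro 𝒱 h𝒱 h𝒱ne _ ⟨P, hP, rfl⟩
    exact exists_mem_vietorisBasics_forall_subset_inter_nonempty (hne P hP) (hinter P hP)
      (fun V hV hVne => hC.2.2.2 V hV hVne P hP) h𝒱 h𝒱ne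

end Vietoris

theorem hyper_iFavorable_general (X : Type*) [TopologicalSpace X] [T2Space X] (h : IFavorable X) :
    IFavorable (Hyper X) := by
  obtain ⟨C, hC, hinter⟩ := h.exists_isClubFilter
  exact (hC.image_vietorisBasics hinter).iFavorable isPiBase_vietorisBasics

/-- If a compact Hausdorff space is I-favorable, then its hyperspace of
nonempty closed sets with the Vietoris topology is I-favorable. -/
theorem hyper_iFavorable (X : Type*) [TopologicalSpace X] [CompactSpace X]
    [T2Space X] (h : IFavorable X) : IFavorable (Hyper X) :=
  hyper_iFavorable_general X h
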